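/- For F(λ) = σ_k(λ)^{1/k} on Γ_k^+, the sum of partial derivatives satisfies Σ_{i=1}^n ∂F/∂λ_i ≥ 1 at every point of Γ_k^+. -/

import Mathlib

/-!
Write `E j = σ_j / C(n, j)`. Newton's inequalities `E j * E (j + 2) ≤ E (j + 1) ^ 2` hold for every
real `λ`: the polynomial `∏ (X + λ_i)` has only real roots, and by Rolle's theorem so has every
polynomial obtained from it by differentiating and reversing. Differentiating `n - j - 2` times,
reversing and differentiating `j` more times leaves a real-rooted quadratic, and the nonnegativity
of its discriminant is exactly Newton's inequality.

On `Γ_k^+` the `E j` with `j ≤ k` are positive, so Newton's inequalities chain to Maclaurin's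
`E k ^ (k - 1) ≤ E (k - 1) ^ k`. Since `∑ i, σ_{k-1}(λ | i) = (n - k + 1) σ_{k-1} = k C(n, k) E (k - 1)`
and `σ_k ^ ((k - 1) / k) = C(n, k) ^ ((k - 1) / k) E k ^ ((k - 1) / k) ≤ C(n, k) E (k - 1)`,
the quotient is at least `1`.
-/

open Finset

noncomputable def esymm (n k : ℕ) (x : Fin n → ℝ) : ℝ :=
  ∑ s ∈ (Finset.univ : Finset (Fin n)).powersetCard k, ∏ i ∈ s, x i

/-- σ_{k}(λ with i-th coordinate deleted) -/
noncomputable def esymmDel (n k : ℕ) (x : Fin n → ℝ) (i : Fin n) : ℝ :=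
  ∑ s ∈ ((Finset.univ : Finset (Fin n)).erase i).powersetCard k, ∏ j ∈ s, x j

def GammaPlus (n k : ℕ) : Set (Fin n → ℝ) :=
  {x | ∀ j : ℕ, 1 ≤ j → j ≤ k → 0 < esymm n j x}

open Nat

namespace Polynomial

theorem Splits.derivative_real {p : ℝ[X]} (hp : p.Splits) : (derivative p).Splits := by
  rw [splits_iff_card_roots] at hp ⊢
  have := p.card_roots_le_derivative
  have := p.natDegree_derivative_le
  have := (derivative p).card_roots'
  omega

theorem Splits.iterate_derivative_real {p : ℝ[X]} (hp : p.Splits) (k : ℕ) :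
    (derivative^[k] p).Splits := by
  induction k with
  | zero => exact hp
  | succ k ih => rw [Function.iterate_succ_apply']; exact ih.derivative_real

theorem Splits.reverse {K : Type*} [Field K] {p : K[X]} (hp : p.Splits) : p.reverse.Splits := by
  induction hp using Submonoid.closure_induction with
  | mem f hf =>
    obtain ⟨a, rfl⟩ | ⟨a, rfl⟩ := hf
    · rw [reverse_C]; exact Splits.C a
    · exact Splits.of_natDegree_le_one ((reverse_natDegree_le _).trans (by simp))
  | one => rw [← C_1, reverse_C]; exact Splits.C 1
  | mul f g _ _ hf hg => rw [reverse_mul_of_domain]; exact hf.mul hg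

section CoeffIterateDerivative

variable {R : Type*} [CommSemiring R]

theorem coeff_iterate_derivative_mul_factorial (p : R[X]) (k r : ℕ) :
    (derivative^[k] p).coeff r * r ! = (r + k)! * p.coeff (r + k) := by
  rw [coeff_iterate_derivative, nsmul_eq_mul, mul_comm, ← mul_assoc]
  norm_cast
  rw [← factorial_mul_descFactorial (le_add_left k r), Nat.add_sub_cancel]

variable [IsAddTorsionFree R]

theorem natDegree_iterate_derivative_eq (p : R[X]) (k : ℕ) :
    (derivative^[k] p).natDegree = p.natDegree - k := by
  induction k with
  | zero => rfl
  | succ k ih => rw [Function.iterate_succ_apply', natDegree_derivative, ih]; omega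

theorem coeff_iterate_derivative_reverse_iterate_derivative {p : R[X]} {m d : ℕ}
    (hp : p.natDegree = m + d + 2) {r s : ℕ} (hrs : r + s = 2) :
    (derivative^[d] (derivative^[m] p).reverse).coeff r * r ! * s ! =
      (d + r)! * (m + s)! * p.coeff (m + s) := by
  have hdeg : (derivative^[m] p).natDegree = d + 2 := by
    rw [natDegree_iterate_derivative_eq, hp]; omega
  rw [coeff_iterate_derivative_mul_factorial, coeff_reverse, hdeg, revAt_le (by omega),
    mul_assoc, show d + 2 - (r + d) = s by omega, coeff_iterate_derivative_mul_factorial,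
    mul_assoc, add_comm r, add_comm s]

end CoeffIterateDerivative

theorem Splits.newton_inequality {p : ℝ[X]} (hp : p.Splits) {m d : ℕ}
    (hdeg : p.natDegree = m + d + 2) :
    (p.coeff m * m ! * (d + 2)!) * (p.coeff (m + 2) * (m + 2)! * d !) ≤
      (p.coeff (m + 1) * (m + 1)! * (d + 1)!) ^ 2 := by
  rcases eq_or_ne (p.coeff m) 0 with h0 | h0
  · rw [h0]; simp only [zero_mul]; positivity
  have hc0 := coeff_iterate_derivative_reverse_iterate_derivative hdeg (r := 0) (s := 2) rfl
  have hc1 := coeff_iterate_derivative_reverse_iterate_derivative hdeg (r := 1) (s := 1) rfl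
  have hc2 := coeff_iterate_derivative_reverse_iterate_derivative hdeg (r := 2) (s := 0) rfl
  have hqdeg : (derivative^[d] (derivative^[m] p).reverse).natDegree < 3 := by
    rw [natDegree_iterate_derivative_eq]
    have := (derivative^[m] p).reverse_natDegree_le
    rw [natDegree_iterate_derivative_eq, hdeg] at this
    omega
  -- a real-rooted quadratic carrying the coefficients `m + 2, m + 1, m` of `p`
  set q := derivative^[d] (derivative^[m] p).reverse
  simp only [add_zero, factorial_zero, factorial_one, factorial_two, Nat.cast_one,
    Nat.cast_ofNat, mul_one] at hc0 hc1 hc2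
  have hq2 : q.coeff 2 ≠ 0 := by
    intro h
    rw [h, zero_mul, eq_comm] at hc2
    simp [factorial_ne_zero, h0] at hc2
  have hq : q.Splits := (hp.iterate_derivative_real m).reverse.iterate_derivative_real d
  obtain ⟨t, ht⟩ := hq.exists_eval_eq_zero fun h => hq2 (by rw [eq_C_of_degree_eq_zero h]; simp)
  rw [eval_eq_sum_range' hqdeg] at ht
  simp only [sum_range_succ, sum_range_zero] at ht
  have hdisc := discrim_eq_sq_of_quadratic_eq_zero (a := q.coeff 2) (b := q.coeff 1)
    (c := q.coeff 0) (x := t) (by linear_combination ht)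
  have hdisc_nonneg : 0 ≤ discrim (q.coeff 2) (q.coeff 1) (q.coeff 0) := hdisc ▸ sq_nonneg _
  rw [discrim] at hdisc_nonneg
  calc (p.coeff m * m ! * (d + 2)!) * (p.coeff (m + 2) * (m + 2)! * d !)
      = (q.coeff 2 * 2) * (q.coeff 0 * 2) := by rw [hc2, hc0]; ring
    _ ≤ q.coeff 1 ^ 2 := by linarith
    _ = (p.coeff (m + 1) * (m + 1)! * (d + 1)!) ^ 2 := by rw [hc1]; ring

end Polynomial

theorem pow_succ_le_pow_of_mul_le_sq {a : ℕ → ℝ} {k : ℕ} (h0 : 1 ≤ a 0)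
    (hpos : ∀ j ≤ k, 0 < a j) (hmul : ∀ j, j + 2 ≤ k → a j * a (j + 2) ≤ a (j + 1) ^ 2) :
    ∀ m, m + 1 ≤ k → a (m + 1) ^ m ≤ a m ^ (m + 1) := by
  intro m
  induction m with
  | zero => exact fun _ => by simpa using h0
  | succ m ih =>
    intro hm
    refine le_of_mul_le_mul_right ?_ (pow_pos (hpos (m + 1) (by omega)) m)
    calc a (m + 2) ^ (m + 1) * a (m + 1) ^ m
        ≤ a (m + 2) ^ (m + 1) * a m ^ (m + 1) :=
          mul_le_mul_of_nonneg_left (ih (by omega)) (pow_nonneg (hpos _ hm).le _)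
      _ = (a m * a (m + 2)) ^ (m + 1) := by ring
      _ ≤ (a (m + 1) ^ 2) ^ (m + 1) := by
          gcongr
          · exact mul_nonneg (hpos m (by omega)).le (hpos _ hm).le
          · exact hmul m hm
      _ = a (m + 1) ^ (m + 1 + 1) * a (m + 1) ^ m := by ring

theorem Real.rpow_div_add_one_le {a b : ℝ} (ha : 0 ≤ a) (hb : 0 ≤ b) {m : ℕ}
    (h : a ^ m ≤ b ^ (m + 1)) : a ^ ((m : ℝ) / (m + 1)) ≤ b := by
  calc a ^ ((m : ℝ) / (m + 1)) = (a ^ m) ^ (((m + 1 : ℕ) : ℝ)⁻¹) := by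
        rw [← Real.rpow_natCast, ← Real.rpow_mul ha]; push_cast; ring_nf
    _ ≤ (b ^ (m + 1)) ^ (((m + 1 : ℕ) : ℝ)⁻¹) := by gcongr
    _ = b := Real.pow_rpow_inv_natCast hb (succ_ne_zero m)

open Polynomial

theorem esymm_zero (n : ℕ) (x : Fin n → ℝ) : esymm n 0 x = 1 := by
  simp [esymm]

theorem sum_esymmDel (n m : ℕ) (x : Fin n → ℝ) :
    ∑ i, esymmDel n m x i = (n - m : ℕ) * esymm n m x := by
  have hdel (i : Fin n) :
      (univ.erase i).powersetCard m = (univ.powersetCard m).filter (i ∉ ·) := by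
    ext s; simp [subset_erase, and_comm]
  simp_rw [esymmDel, hdel, sum_filter]
  rw [sum_comm, esymm, mul_sum]
  refine sum_congr rfl fun s hs => ?_
  rw [← sum_filter, sum_const, nsmul_eq_mul, show univ.filter (· ∉ s) = sᶜ by ext; simp,
    card_compl, Fintype.card_fin, (mem_powersetCard.1 hs).2]

theorem coeff_prod_X_add_C {n : ℕ} (x : Fin n → ℝ) {i j : ℕ} (hij : i + j = n) :
    (∏ l, (X + C (x l))).coeff i = esymm n j x := by
  rw [prod_X_add_C_coeff _ _ (by simp; omega)]
  simp [esymm, show n - i = j by omega]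

theorem natDegree_prod_X_add_C (n : ℕ) (x : Fin n → ℝ) :
    (∏ j, (X + C (x j))).natDegree = n := by
  rw [natDegree_prod _ _ fun j _ => X_add_C_ne_zero (x j)]
  simp

noncomputable def esymmMean (n j : ℕ) (x : Fin n → ℝ) : ℝ := esymm n j x / n.choose j

theorem esymmMean_eq {n i j : ℕ} (x : Fin n → ℝ) (hij : i + j = n) :
    esymmMean n j x = esymm n j x * j ! * i ! / n ! := by
  rw [esymmMean, ← choose_mul_factorial_mul_factorial (show j ≤ n by omega),
    show n - j = i by omega]
  push_cast
  field_simp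

theorem esymmMean_mul_esymmMean_le_sq {n j : ℕ} (x : Fin n → ℝ) (hj : j + 2 ≤ n) :
    esymmMean n j x * esymmMean n (j + 2) x ≤ esymmMean n (j + 1) x ^ 2 := by
  obtain ⟨d, rfl⟩ : ∃ d, n = d + j + 2 := ⟨n - j - 2, by omega⟩
  have hnewton := (Splits.prod fun l _ => Splits.X_add_C (x l)).newton_inequality
    (natDegree_prod_X_add_C _ x)
  rw [coeff_prod_X_add_C x (i := d) (j := j + 2) (by ring),
    coeff_prod_X_add_C x (i := d + 1) (j := j + 1) (by ring),
    coeff_prod_X_add_C x (i := d + 2) (j := j) (by ring)] at hnewton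
  rw [esymmMean_eq x (i := d + 2) (j := j) (by ring),
    esymmMean_eq x (i := d + 1) (j := j + 1) (by ring),
    esymmMean_eq x (i := d) (j := j + 2) (by ring)]
  field_simp
  linarith

theorem esymmMean_pos {n k : ℕ} (hkn : k ≤ n) {x : Fin n → ℝ} (hx : x ∈ GammaPlus n k) {j : ℕ}
    (hj : j ≤ k) : 0 < esymmMean n j x := by
  refine div_pos ?_ (by exact_mod_cast choose_pos (hj.trans hkn))
  rcases j.eq_zero_or_pos with rfl | hj0
  · simp [esymm_zero]
  · exact hx j hj0 hj

theorem esymm_rpow_le_choose_mul_esymmMean {n m : ℕ} (hmn : m + 1 ≤ n) {x : Fin n → ℝ}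
    (hx : x ∈ GammaPlus n (m + 1)) :
    esymm n (m + 1) x ^ ((m : ℝ) / (m + 1)) ≤ n.choose (m + 1) * esymmMean n m x := by
  have hmaclaurin := pow_succ_le_pow_of_mul_le_sq (by simp [esymmMean, esymm_zero])
    (fun j hj => esymmMean_pos hmn hx hj)
    (fun j hj => esymmMean_mul_esymmMean_le_sq x (by omega)) m le_rfl
  have hpos := esymmMean_pos hmn hx le_rfl
  have hchoose : (1 : ℝ) ≤ n.choose (m + 1) := by exact_mod_cast choose_pos hmn
  calc esymm n (m + 1) x ^ ((m : ℝ) / (m + 1))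
      = (n.choose (m + 1) : ℝ) ^ ((m : ℝ) / (m + 1)) *
          esymmMean n (m + 1) x ^ ((m : ℝ) / (m + 1)) := by
        rw [← Real.mul_rpow (by positivity) hpos.le, esymmMean, mul_div_cancel₀]
        positivity
    _ ≤ n.choose (m + 1) * esymmMean n m x := by
        gcongr
        · exact Real.rpow_le_self_of_one_le hchoose (by rw [div_le_one (by positivity)]; linarith)
        · exact Real.rpow_div_add_one_le hpos.le (esymmMean_pos hmn hx (by omega)).le hmaclaurin

theorem succ_mul_choose_mul_esymmMean {n m : ℕ} (hmn : m ≤ n) (x : Fin n → ℝ) :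
    ((m : ℝ) + 1) * (n.choose (m + 1) * esymmMean n m x) = (n - m : ℕ) * esymm n m x := by
  have hpascal : (n.choose (m + 1) : ℝ) * (m + 1) = n.choose m * (n - m : ℕ) := by
    exact_mod_cast choose_succ_right_eq n m
  have : (n.choose m : ℝ) ≠ 0 := by exact_mod_cast (choose_pos hmn).ne'
  rw [esymmMean]
  field_simp
  linear_combination esymm n m x * hpascal

theorem stmt_12 (n k : ℕ) (hk : 1 ≤ k) (hkn : k ≤ n) :
    ∀ x ∈ GammaPlus n k,
      (∑ i : Fin n, esymmDel n (k - 1) x i) / ((k : ℝ) * (esymm n k x) ^ (((k : ℝ) - 1) / k)) ≥ 1 := by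
  intro x hx
  obtain ⟨m, rfl⟩ : ∃ m, k = m + 1 := ⟨k - 1, by omega⟩
  have hσ : 0 < esymm n (m + 1) x := hx _ hk le_rfl
  rw [ge_iff_le, one_le_div (by positivity), sum_esymmDel]
  push_cast
  simp only [add_sub_cancel_right]
  calc ((m : ℝ) + 1) * esymm n (m + 1) x ^ ((m : ℝ) / (m + 1))
      ≤ (m + 1) * (n.choose (m + 1) * esymmMean n m x) := by
        gcongr
        exact esymm_rpow_le_choose_mul_esymmMean hkn hx
    _ = (n - m : ℕ) * esymm n m x := succ_mul_choose_mul_esymmMean (by omega) x
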